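/- arXiv:1506.07273 — 3 statements merged into one kernel-verified Lean document; each statement's English description precedes it below -/
import Mathlib

section
/- Let ϱ : Rⁿ → Rⁿ be the (1-2u²)-constacyclic shift ϱ(r₀,…,r_{n-1}) = ((1-2u²)r_{n-1}, r₀,…,r_{n-2}), and σ : F_p^{2n} → F_p^{2n} the cyclic shift. Let Φ : Rⁿ → F_p^{2n} send (r₀,…,r_{n-1}) with r_i = a_i + b_i u + c_i u² to (-c₀,…,-c_{n-1}, 2a₀+c₀,…, 2a_{n-1}+c_{n-1}). Then Φ ∘ ϱ = σ ∘ Φ. -/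
open Polynomial

abbrev Rp (p : ℕ) := AdjoinRoot (X ^ 3 - X : (ZMod p)[X])
noncomputable def uu (p : ℕ) : Rp p := AdjoinRoot.root _
noncomputable def lam (p : ℕ) : Rp p := 1 - 2 * uu p ^ 2
noncomputable def am (p : ℕ) : ZMod p →+* Rp p := algebraMap (ZMod p) (Rp p)

/-- The `(1-2u²)`-constacyclic shift on `Rⁿ`. -/
noncomputable def rho (p n : ℕ) [NeZero n] (r : Fin n → Rp p) : Fin n → Rp p :=
  fun i => if i = 0 then lam p * r (i - 1) else r (i - 1)

/-- The cyclic shift. -/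
def cshift {α : Type*} {n : ℕ} [NeZero n] (x : Fin n → α) : Fin n → α := fun i => x (i - 1)

/-- Encode coefficient vectors `a, b, c` as the element of `Rⁿ` with coordinates
`aᵢ + bᵢu + cᵢu²`. -/
noncomputable def enc (p n : ℕ) (a b c : Fin n → ZMod p) : Fin n → Rp p :=
  fun i => am p (a i) + am p (b i) * uu p + am p (c i) * uu p ^ 2

/-- The Gray image `(-c₀,…,-c_{n-1}, 2a₀+c₀,…,2a_{n-1}+c_{n-1})`. -/
def grayOut (p n : ℕ) (a c : Fin n → ZMod p) : Fin (2 * n) → ZMod p :=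
  fun j =>
    if h : (j : ℕ) < n then - c ⟨j, h⟩
    else 2 * a ⟨(j : ℕ) - n, by have := j.isLt; omega⟩ +
      c ⟨(j : ℕ) - n, by have := j.isLt; omega⟩

theorem sub1val {m : ℕ} [NeZero m] (j : Fin m) : (j - 1).val = if j.val = 0 then m - 1 else j.val - 1 := by
  have hm : 0 < m := Nat.pos_of_ne_zero (NeZero.ne m)
  have hj := j.isLt
  rw [Fin.sub_def]
  simp only [Fin.val_one']
  rcases Nat.lt_or_ge 1 m with h2 | h1
  · rw [Nat.mod_eq_of_lt h2]
    by_cases h0 : j.val = 0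
    · simp [h0, Nat.mod_eq_of_lt (by omega : m - 1 < m)]
    · have : (m - 1 + j.val) = (j.val - 1) + m := by omega
      rw [this, Nat.add_mod_right, Nat.mod_eq_of_lt (by omega), if_neg h0]
  · have hm1 : m = 1 := by omega
    subst hm1
    have hj0 : j.val = 0 := by omega
    simp [hj0]

theorem u3 (p : ℕ) : uu p ^ 3 = uu p := by
  have h := AdjoinRoot.mk_self (f := (X ^ 3 - X : (ZMod p)[X]))
  rw [map_sub, map_pow, AdjoinRoot.mk_X] at h
  have : (AdjoinRoot.root (X ^ 3 - X : (ZMod p)[X])) ^ 3 - AdjoinRoot.root _ = 0 := h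
  rw [sub_eq_zero] at this
  exact this

theorem exists_abc (p : ℕ) (r : Rp p) :
    ∃ a b c : ZMod p, r = am p a + am p b * uu p + am p c * uu p ^ 2 := by
  obtain ⟨P, rfl⟩ := AdjoinRoot.mk_surjective r
  induction P using Polynomial.induction_on with
  | C a =>
      exact ⟨a, 0, 0, by simp [am, AdjoinRoot.algebraMap_eq, AdjoinRoot.mk_C]⟩
  | add P Q hP hQ =>
      obtain ⟨a1, b1, c1, h1⟩ := hP
      obtain ⟨a2, b2, c2, h2⟩ := hQ
      exact ⟨a1 + a2, b1 + b2, c1 + c2, by rw [map_add, h1, h2]; push_cast [map_add]; ring⟩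
  | monomial k a hk =>
      obtain ⟨A, B, C, h⟩ := hk
      refine ⟨0, A + C, B, ?_⟩
      have e : Polynomial.C a * X ^ (k + 1) = Polynomial.C a * X ^ k * X := by ring
      have this1 : AdjoinRoot.mk (X ^ 3 - X : (ZMod p)[X]) (Polynomial.C a * X ^ (k + 1))
          = AdjoinRoot.mk _ (Polynomial.C a * X ^ k) * uu p := by
        rw [e, map_mul, AdjoinRoot.mk_X]; rfl
      rw [this1, h]
      have h3 := u3 p
      push_cast [map_add, map_zero]
      linear_combination (am p C) * h3

set_option maxHeartbeats 1000000 in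
theorem gray_constacyclic_commute (p n : ℕ) [Fact p.Prime] (hp : p ≠ 2) [NeZero n]
    (Φ : (Fin n → Rp p) → Fin (2 * n) → ZMod p)
    (hΦ : ∀ a b c : Fin n → ZMod p, Φ (enc p n a b c) = grayOut p n a c) :
    Φ ∘ rho p n = cshift ∘ Φ := by
  have hn : 0 < n := Nat.pos_of_ne_zero (NeZero.ne n)
  funext r
  simp only [Function.comp_apply]
  have H : ∀ i, ∃ a b c, r i = am p a + am p b * uu p + am p c * uu p ^ 2 :=
    fun i => exists_abc p (r i)
  choose a b c hr using H
  have hrE : r = enc p n a b c := funext hr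
  set a' : Fin n → ZMod p := fun i => a (i - 1) with ha'
  set b' : Fin n → ZMod p := fun i => if i = 0 then -b (i - 1) else b (i - 1) with hb'
  set c' : Fin n → ZMod p := fun i => if i = 0 then -(2 * a (i - 1) + c (i - 1)) else c (i - 1)
    with hc'
  have h3 := u3 p
  have h4 : uu p ^ 4 = uu p ^ 2 := by
    calc uu p ^ 4 = uu p ^ 3 * uu p := by ring
    _ = uu p * uu p := by rw [h3]
    _ = uu p ^ 2 := by ring
  have hrho : rho p n r = enc p n a' b' c' := by
    funext i
    simp only [rho, enc, hrE, ha', hb', hc']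
    by_cases h0 : i = 0
    · simp only [if_pos h0, lam, map_neg, map_add, map_mul, map_ofNat]
      linear_combination (-2 * am p (b (i - 1))) * h3 + (-2 * am p (c (i - 1))) * h4
    · simp only [if_neg h0]
  rw [hrho, hΦ, hrE, hΦ]
  funext j
  have hj := j.isLt
  have hs := sub1val j
  simp only [cshift, grayOut, ha', hb', hc']
  rcases Nat.lt_or_ge (j : ℕ) n with hlt | hge
  · by_cases h0 : (j : ℕ) = 0
    · have hz : (⟨(j : ℕ), hlt⟩ : Fin n) = 0 := Fin.ext (by simpa using h0)
      have hv : (j - 1).val = 2 * n - 1 := by rw [hs, if_pos h0]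
      rw [dif_pos hlt, if_pos hz, dif_neg (show ¬ (j - 1).val < n by omega)]
      have e1 : (⟨(j : ℕ), hlt⟩ : Fin n) - 1 = (⟨(j - 1).val - n, by omega⟩ : Fin n) :=
        Fin.val_injective (by
          rw [sub1val (⟨(j : ℕ), hlt⟩ : Fin n)]; simp only [Fin.val_mk]; rw [if_pos h0]; omega)
      linear_combination 2 * congrArg a e1 + congrArg c e1
    · have hz : (⟨(j : ℕ), hlt⟩ : Fin n) ≠ 0 := by
        intro h; exact h0 (by simpa using congrArg Fin.val h)
      have hv : (j - 1).val = (j : ℕ) - 1 := by rw [hs, if_neg h0]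
      rw [dif_pos hlt, if_neg hz, dif_pos (show (j - 1).val < n by omega)]
      have e1 : (⟨(j : ℕ), hlt⟩ : Fin n) - 1 = (⟨(j - 1).val, by omega⟩ : Fin n) :=
        Fin.val_injective (by
          rw [sub1val (⟨(j : ℕ), hlt⟩ : Fin n)]; simp only [Fin.val_mk]; rw [if_neg h0]; omega)
      linear_combination (-1 : ZMod p) * congrArg c e1
  · by_cases h0 : (j : ℕ) = n
    · have hz : (⟨(j : ℕ) - n, by omega⟩ : Fin n) = 0 := Fin.ext (by simp [h0])
      have hv : (j - 1).val = n - 1 := by rw [hs, if_neg (by omega)]; omega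
      rw [dif_neg (show ¬ (j : ℕ) < n by omega), if_pos hz,
        dif_pos (show (j - 1).val < n by omega)]
      have e1 : (⟨(j : ℕ) - n, by omega⟩ : Fin n) - 1 = (⟨(j - 1).val, by omega⟩ : Fin n) :=
        Fin.val_injective (by
          rw [sub1val (⟨(j : ℕ) - n, by omega⟩ : Fin n)]; simp only [Fin.val_mk]
          rw [if_pos (by omega : (j : ℕ) - n = 0)]; omega)
      linear_combination (-1 : ZMod p) * congrArg c e1
    · have hz : (⟨(j : ℕ) - n, by omega⟩ : Fin n) ≠ 0 := by
        intro h
        have := congrArg Fin.val h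
        simp at this
        omega
      have hv : (j - 1).val = (j : ℕ) - 1 := by rw [hs, if_neg (by omega)]
      rw [dif_neg (show ¬ (j : ℕ) < n by omega), if_neg hz,
        dif_neg (show ¬ (j - 1).val < n by omega)]
      have e1 : (⟨(j : ℕ) - n, by omega⟩ : Fin n) - 1 = (⟨(j - 1).val - n, by omega⟩ : Fin n) :=
        Fin.val_injective (by
          rw [sub1val (⟨(j : ℕ) - n, by omega⟩ : Fin n)]; simp only [Fin.val_mk]
          rw [if_neg (by omega : ¬ (j : ℕ) - n = 0)]; omega)
      linear_combination 2 * congrArg a e1 + congrArg c e1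
end

section
/- Let C = η₁C₁ ⊕ η₂C₂ ⊕ η₃C₃ be a linear code of length n over R. Then C is (1-2u²)-constacyclic if and only if C₁ is a cyclic code and C₂, C₃ are negacyclic codes of length n over F_p. -/
/-!
Evaluation at the roots `0, 1, -1` of `X³ - X` identifies `R` with `F_p³`, and `η₁, η₂, η₃` are
the corresponding orthogonal idempotents: `r ηᵢ = r(cᵢ) ηᵢ` with `(c₁, c₂, c₃) = (0, 1, -1)`.
Hence `encEta` is a bijection `(F_pⁿ)³ ≃ Rⁿ`, and an `R`-submodule `C`, being closed under
multiplication by the `ηᵢ`, is the image of `C₁ × C₂ × C₃`. Since `(1-2u²)η₁ = η₁` and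
`(1-2u²)ηᵢ = -ηᵢ` for `i = 2, 3`, `ϱ` corresponds to `σ × γ × γ`, and `ϱ C = C` becomes an equality
of two products of nonempty sets.
-/

open Polynomial

noncomputable def eta1 (p : ℕ) : Rp p := 1 - uu p ^ 2
noncomputable def eta2 (p : ℕ) : Rp p := am p 2⁻¹ * (uu p + uu p ^ 2)
noncomputable def eta3 (p : ℕ) : Rp p := am p 2⁻¹ * (-uu p + uu p ^ 2)

noncomputable def encEta (p n : ℕ) (x y z : Fin n → ZMod p) : Fin n → Rp p :=
  fun i => eta1 p * am p (x i) + eta2 p * am p (y i) + eta3 p * am p (z i)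

noncomputable def comp1 (p n : ℕ) (C : Set (Fin n → Rp p)) : Set (Fin n → ZMod p) :=
  {x | ∃ y z, encEta p n x y z ∈ C}
noncomputable def comp2 (p n : ℕ) (C : Set (Fin n → Rp p)) : Set (Fin n → ZMod p) :=
  {y | ∃ x z, encEta p n x y z ∈ C}
noncomputable def comp3 (p n : ℕ) (C : Set (Fin n → Rp p)) : Set (Fin n → ZMod p) :=
  {z | ∃ x y, encEta p n x y z ∈ C}

/-- The negacyclic shift on `F_pⁿ`. -/
def nshift {n : ℕ} [NeZero n] {α : Type*} [Ring α] (x : Fin n → α) : Fin n → α :=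
  fun i => if i = 0 then - x (i - 1) else x (i - 1)

theorem Polynomial.aeval_mul_eq_of_mul_eq {R A : Type*} [CommRing R] [CommRing A] [Algebra R A]
    {a e : A} {c : R} (h : a * e = algebraMap R A c * e) (f : R[X]) :
    aeval a f * e = algebraMap R A (f.eval c) * e := by
  obtain ⟨q, hq⟩ := sub_dvd_eval_sub a (algebraMap R A c) (f.map (algebraMap R A))
  rw [eval_map_algebraMap, eval_map_algebraMap, aeval_algebraMap_apply, coe_aeval_eq_eval] at hq
  linear_combination e * hq + q * h

theorem ZMod.two_ne_zero_of_ne_two {p : ℕ} [Fact p.Prime] (hp : p ≠ 2) : (2 : ZMod p) ≠ 0 :=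
  Ring.two_ne_zero (by rwa [ZMod.ringChar_zmod_n])

namespace Rp

section Ring

variable {p : ℕ}

theorem uu_pow_three : uu p ^ 3 = uu p := by
  have h := AdjoinRoot.mk_self (f := (X ^ 3 - X : (ZMod p)[X]))
  simp only [map_sub, map_pow, AdjoinRoot.mk_X] at h
  exact sub_eq_zero.mp h

theorem uu_mul_eta1 : uu p * eta1 p = 0 := by
  unfold eta1; linear_combination -uu_pow_three

theorem uu_mul_eta2 : uu p * eta2 p = eta2 p := by
  unfold eta2; linear_combination am p 2⁻¹ * uu_pow_three

theorem uu_mul_eta3 : uu p * eta3 p = -eta3 p := by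
  unfold eta3; linear_combination am p 2⁻¹ * uu_pow_three

theorem lam_mul_eta1 : lam p * eta1 p = eta1 p := by
  unfold lam; linear_combination -2 * uu p * uu_mul_eta1

theorem lam_mul_eta2 : lam p * eta2 p = -eta2 p := by
  unfold lam; linear_combination -2 * uu p * uu_mul_eta2 - 2 * uu_mul_eta2

theorem lam_mul_eta3 : lam p * eta3 p = -eta3 p := by
  unfold lam; linear_combination -2 * uu p * uu_mul_eta3 + 2 * uu_mul_eta3

theorem eta1_add_eta2_add_eta3 [Fact p.Prime] (hp : p ≠ 2) : eta1 p + eta2 p + eta3 p = 1 := by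
  have h : am p 2⁻¹ * 2 = 1 := by
    rw [← map_ofNat (am p) 2, ← map_mul, inv_mul_cancel₀ (ZMod.two_ne_zero_of_ne_two hp),
      map_one]
  unfold eta1 eta2 eta3; linear_combination uu p ^ 2 * h

noncomputable def evalRp (c : ZMod p) (hc : c ^ 3 = c) : Rp p →ₐ[ZMod p] ZMod p :=
  AdjoinRoot.liftAlgHom _ (AlgHom.id _ _) c (by simp [hc])

noncomputable abbrev evalZero : Rp p →ₐ[ZMod p] ZMod p := evalRp 0 (zero_pow three_ne_zero)

noncomputable abbrev evalOne : Rp p →ₐ[ZMod p] ZMod p := evalRp 1 (one_pow 3)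

noncomputable abbrev evalNegOne : Rp p →ₐ[ZMod p] ZMod p := evalRp (-1) (by norm_num)

@[simp]
theorem evalRp_uu {c : ZMod p} (hc : c ^ 3 = c) : evalRp c hc (uu p) = c :=
  AdjoinRoot.liftAlgHom_root _ _ _ _

@[simp]
theorem evalRp_am {c : ZMod p} (hc : c ^ 3 = c) (a : ZMod p) : evalRp c hc (am p a) = a :=
  AlgHom.commutes _ a

theorem mul_eq_am_evalRp_mul {c : ZMod p} (hc : c ^ 3 = c) {e : Rp p}
    (he : uu p * e = am p c * e) (r : Rp p) : r * e = am p (evalRp c hc r) * e := by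
  induction r using AdjoinRoot.induction_on with
  | ih f =>
    have hr : AdjoinRoot.mk _ f = aeval (uu p) f := (AdjoinRoot.aeval_eq f).symm
    rw [hr, ← aeval_algHom_apply, evalRp_uu, coe_aeval_eq_eval]
    exact aeval_mul_eq_of_mul_eq he f

theorem mul_eta1 (r : Rp p) : r * eta1 p = am p (evalZero r) * eta1 p :=
  mul_eq_am_evalRp_mul _ (by simpa using uu_mul_eta1) r

theorem mul_eta2 (r : Rp p) : r * eta2 p = am p (evalOne r) * eta2 p :=
  mul_eq_am_evalRp_mul _ (by simpa using uu_mul_eta2) r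

theorem mul_eta3 (r : Rp p) : r * eta3 p = am p (evalNegOne r) * eta3 p :=
  mul_eq_am_evalRp_mul _ (by simpa using uu_mul_eta3) r

end Ring

section Vectors

variable {p n : ℕ}

theorem evalRp_encEta {c : ZMod p} (hc : c ^ 3 = c) (x y z : Fin n → ZMod p) (i : Fin n) :
    evalRp c hc (encEta p n x y z i) =
      (1 - c ^ 2) * x i + 2⁻¹ * (c + c ^ 2) * y i + 2⁻¹ * (-c + c ^ 2) * z i := by
  simp [encEta, eta1, eta2, eta3]

theorem evalZero_encEta (x y z : Fin n → ZMod p) (i : Fin n) :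
    evalZero (encEta p n x y z i) = x i := by
  simp [evalRp_encEta]

variable [Fact p.Prime]

theorem evalOne_encEta (hp : p ≠ 2) (x y z : Fin n → ZMod p) (i : Fin n) :
    evalOne (encEta p n x y z i) = y i := by
  rw [evalRp_encEta]
  linear_combination y i * inv_mul_cancel₀ (ZMod.two_ne_zero_of_ne_two hp)

theorem evalNegOne_encEta (hp : p ≠ 2) (x y z : Fin n → ZMod p) (i : Fin n) :
    evalNegOne (encEta p n x y z i) = z i := by
  rw [evalRp_encEta]
  linear_combination z i * inv_mul_cancel₀ (ZMod.two_ne_zero_of_ne_two hp)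

theorem encEta_evals (hp : p ≠ 2) (r : Fin n → Rp p) :
    encEta p n (fun i => evalZero (r i)) (fun i => evalOne (r i)) (fun i => evalNegOne (r i)) =
      r := by
  funext i
  simp only [encEta]
  linear_combination -mul_eta1 (r i) - mul_eta2 (r i) - mul_eta3 (r i) +
    r i * eta1_add_eta2_add_eta3 hp

noncomputable def etaEquiv (hp : p ≠ 2) :
    (Fin n → ZMod p) × (Fin n → ZMod p) × (Fin n → ZMod p) ≃ (Fin n → Rp p) where
  toFun t := encEta p n t.1 t.2.1 t.2.2
  invFun r := (fun i => evalZero (r i), fun i => evalOne (r i), fun i => evalNegOne (r i))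
  left_inv t := by
    ext i <;> simp only [evalZero_encEta, evalOne_encEta hp, evalNegOne_encEta hp]
  right_inv := encEta_evals hp

theorem etaEquiv_apply (hp : p ≠ 2) (t : (Fin n → ZMod p) × (Fin n → ZMod p) × (Fin n → ZMod p)) :
    etaEquiv hp t = encEta p n t.1 t.2.1 t.2.2 :=
  rfl

theorem encEta_eq_smul_add_smul_add_smul (hp : p ≠ 2) (x y z x₂ x₃ y₁ y₃ z₁ z₂ : Fin n → ZMod p) :
    encEta p n x y z =
      eta1 p • encEta p n x y₁ z₁ + eta2 p • encEta p n x₂ y z₂ + eta3 p • encEta p n x₃ y₃ z := by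
  funext i
  rw [Pi.add_apply, Pi.add_apply, Pi.smul_apply, Pi.smul_apply, Pi.smul_apply, smul_eq_mul,
    smul_eq_mul, smul_eq_mul, mul_comm (eta1 p), mul_comm (eta2 p), mul_comm (eta3 p), mul_eta1,
    mul_eta2, mul_eta3, evalZero_encEta, evalOne_encEta hp, evalNegOne_encEta hp]
  simp only [encEta, mul_comm]

theorem coe_eq_etaEquiv_image_prod (hp : p ≠ 2) (C : Submodule (Rp p) (Fin n → Rp p)) :
    (C : Set (Fin n → Rp p)) = etaEquiv hp '' (comp1 p n C ×ˢ comp2 p n C ×ˢ comp3 p n C) := by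
  ext r
  constructor
  · intro hr
    have hmem : encEta p n _ _ _ ∈ C := ((etaEquiv hp).apply_symm_apply r).symm ▸ hr
    exact ⟨(etaEquiv hp).symm r, ⟨⟨_, _, hmem⟩, ⟨_, _, hmem⟩, ⟨_, _, hmem⟩⟩,
      (etaEquiv hp).apply_symm_apply r⟩
  · rintro ⟨⟨x, y, z⟩, ⟨⟨y₁, z₁, h₁⟩, ⟨x₂, z₂, h₂⟩, ⟨x₃, y₃, h₃⟩⟩, rfl⟩
    rw [etaEquiv_apply, encEta_eq_smul_add_smul_add_smul hp x y z x₂ x₃ y₁ y₃ z₁ z₂]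
    exact C.add_mem (C.add_mem (C.smul_mem _ h₁) (C.smul_mem _ h₂)) (C.smul_mem _ h₃)

end Vectors

section Shifts

variable {p n : ℕ} [NeZero n]

theorem rho_encEta (x y z : Fin n → ZMod p) :
    rho p n (encEta p n x y z) = encEta p n (cshift x) (nshift y) (nshift z) := by
  funext i
  by_cases hi : i = 0
  · simp only [rho, encEta, cshift, nshift, if_pos hi, map_neg]
    linear_combination am p (x (i - 1)) * lam_mul_eta1 + am p (y (i - 1)) * lam_mul_eta2 +
      am p (z (i - 1)) * lam_mul_eta3
  · simp only [rho, encEta, cshift, nshift, if_neg hi]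

theorem rho_image_etaEquiv_image [Fact p.Prime] (hp : p ≠ 2)
    (S : Set ((Fin n → ZMod p) × (Fin n → ZMod p) × (Fin n → ZMod p))) :
    rho p n '' (etaEquiv hp '' S) =
      etaEquiv hp '' (Prod.map cshift (Prod.map nshift nshift) '' S) := by
  rw [Set.image_image, Set.image_image]
  exact Set.image_congr fun t _ => rho_encEta t.1 t.2.1 t.2.2

end Shifts

end Rp

theorem constacyclic_iff_components (p n : ℕ) [Fact p.Prime] (hp : p ≠ 2) [NeZero n]
    (C : Submodule (Rp p) (Fin n → Rp p)) :
    rho p n '' (C : Set (Fin n → Rp p)) = C ↔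
      (cshift '' comp1 p n C = comp1 p n C ∧
       nshift '' comp2 p n C = comp2 p n C ∧
       nshift '' comp3 p n C = comp3 p n C) := by
  set T := comp1 p n C ×ˢ comp2 p n C ×ˢ comp3 p n C
  set e := Rp.etaEquiv (n := n) hp
  have hC : (C : Set (Fin n → Rp p)) = e '' T := Rp.coe_eq_etaEquiv_image_prod hp C
  have hT := (Set.image_nonempty.mp (hC ▸ C.nonempty)).image
    (Prod.map cshift (Prod.map nshift nshift))
  calc rho p n '' C = C ↔ e '' (Prod.map cshift (Prod.map nshift nshift) '' T) = e '' T := by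
        rw [← Rp.rho_image_etaEquiv_image, ← hC]
    _ ↔ Prod.map cshift (Prod.map nshift nshift) '' T = T := e.injective.image_injective.eq_iff
    _ ↔ _ := by
      rw [Set.prodMap_image_prod, Set.prodMap_image_prod] at hT ⊢
      rw [Set.prod_eq_prod_iff_of_nonempty hT,
        Set.prod_eq_prod_iff_of_nonempty (Set.prod_nonempty_iff.mp hT).2]
end

section
/- Suppose g₁h₁ = xⁿ - 1 and g₂h₂ = g₃h₃ = xⁿ + 1 in F_p[x]. Set g = η₁g₁ + η₂g₂ + η₃g₃ and h = η₁h₁ + η₂h₂ + η₃h₃ in R[x]. Then g(x)h(x) = xⁿ - (1-2u²). -/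
open Polynomial

theorem gh_factorization (p n : ℕ) [Fact p.Prime] (hp : p ≠ 2)
    (g₁ g₂ g₃ h₁ h₂ h₃ : (ZMod p)[X])
    (h1 : g₁ * h₁ = X ^ n - 1) (h2 : g₂ * h₂ = X ^ n + 1) (h3 : g₃ * h₃ = X ^ n + 1) :
    (C (eta1 p) * g₁.map (am p) + C (eta2 p) * g₂.map (am p) + C (eta3 p) * g₃.map (am p)) *
      (C (eta1 p) * h₁.map (am p) + C (eta2 p) * h₂.map (am p) + C (eta3 p) * h₃.map (am p)) =
      X ^ n - C (lam p) := by
  -- basic relations in Rp p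
  have hu : uu p ^ 3 = uu p := by
    have := AdjoinRoot.mk_self (f := (X ^ 3 - X : (ZMod p)[X]))
    rw [map_sub, map_pow, sub_eq_zero] at this
    simpa [uu, AdjoinRoot.mk_X] using this
  have h2ne : (2 : ZMod p) ≠ 0 := by
    have : ((2 : ℕ) : ZMod p) ≠ 0 := by
      rw [Ne, ZMod.natCast_eq_zero_iff]
      intro h
      exact hp ((Nat.prime_dvd_prime_iff_eq Fact.out Nat.prime_two).mp h)
    simpa using this
  have hc : am p 2⁻¹ * 2 = 1 := by
    rw [show (2 : Rp p) = am p 2 from (map_ofNat _ 2).symm, ← map_mul,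
      inv_mul_cancel₀ h2ne, map_one]
  set c := am p 2⁻¹ with hcdef
  set u := uu p with hudef
  have h12 : eta1 p * eta2 p = 0 := by
    simp only [eta1, eta2, ← hcdef, ← hudef]
    linear_combination (-c - c * u) * hu
  have h13 : eta1 p * eta3 p = 0 := by
    simp only [eta1, eta3, ← hcdef, ← hudef]
    linear_combination (c - c * u) * hu
  have h23 : eta2 p * eta3 p = 0 := by
    simp only [eta2, eta3, ← hcdef, ← hudef]
    linear_combination (c ^ 2 * u) * hu
  have hi1 : eta1 p ^ 2 = eta1 p := by
    simp only [eta1, ← hudef]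
    linear_combination u * hu
  have hi2 : eta2 p ^ 2 = eta2 p := by
    simp only [eta2, ← hcdef, ← hudef]
    linear_combination (2 * c ^ 2 + c ^ 2 * u) * hu + (c * u + c * u ^ 2) * hc
  have hi3 : eta3 p ^ 2 = eta3 p := by
    simp only [eta3, ← hcdef, ← hudef]
    linear_combination (-2 * c ^ 2 + c ^ 2 * u) * hu + (-(c * u) + c * u ^ 2) * hc
  have hsum : eta1 p + eta2 p + eta3 p = 1 := by
    simp only [eta1, eta2, eta3, ← hcdef, ← hudef]
    linear_combination (u ^ 2) * hc
  have hlam : eta1 p - eta2 p - eta3 p = lam p := by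
    simp only [eta1, eta2, eta3, lam, ← hcdef, ← hudef]
    linear_combination (-(u ^ 2)) * hc
  -- lift relations to polynomial ring
  have C12 : (C (eta1 p) : (Rp p)[X]) * C (eta2 p) = 0 := by rw [← C_mul, h12, C_0]
  have C13 : (C (eta1 p) : (Rp p)[X]) * C (eta3 p) = 0 := by rw [← C_mul, h13, C_0]
  have C23 : (C (eta2 p) : (Rp p)[X]) * C (eta3 p) = 0 := by rw [← C_mul, h23, C_0]
  have Ci1 : (C (eta1 p) : (Rp p)[X]) ^ 2 = C (eta1 p) := by rw [← C_pow, hi1]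
  have Ci2 : (C (eta2 p) : (Rp p)[X]) ^ 2 = C (eta2 p) := by rw [← C_pow, hi2]
  have Ci3 : (C (eta3 p) : (Rp p)[X]) ^ 2 = C (eta3 p) := by rw [← C_pow, hi3]
  have Csum : (C (eta1 p) : (Rp p)[X]) + C (eta2 p) + C (eta3 p) = 1 := by
    rw [← C_add, ← C_add, hsum, C_1]
  have Clam : (C (eta1 p) : (Rp p)[X]) - C (eta2 p) - C (eta3 p) = C (lam p) := by
    rw [← C_sub, ← C_sub, hlam]
  -- mapped factorizations
  have HG1 : g₁.map (am p) * h₁.map (am p) = X ^ n - 1 := by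
    rw [← Polynomial.map_mul, h1]
    simp [Polynomial.map_sub, Polynomial.map_pow]
  have HG2 : g₂.map (am p) * h₂.map (am p) = X ^ n + 1 := by
    rw [← Polynomial.map_mul, h2]
    simp [Polynomial.map_add, Polynomial.map_pow]
  have HG3 : g₃.map (am p) * h₃.map (am p) = X ^ n + 1 := by
    rw [← Polynomial.map_mul, h3]
    simp [Polynomial.map_add, Polynomial.map_pow]
  set G1 := g₁.map (am p); set G2 := g₂.map (am p); set G3 := g₃.map (am p)
  set H1 := h₁.map (am p); set H2 := h₂.map (am p); set H3 := h₃.map (am p)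
  linear_combination (C (eta1 p)) ^ 2 * HG1 + (C (eta2 p)) ^ 2 * HG2 +
    (C (eta3 p)) ^ 2 * HG3 + (G1 * H2 + G2 * H1) * C12 + (G1 * H3 + G3 * H1) * C13 +
    (G2 * H3 + G3 * H2) * C23 + ((X : (Rp p)[X]) ^ n - 1) * Ci1 +
    ((X : (Rp p)[X]) ^ n + 1) * Ci2 + ((X : (Rp p)[X]) ^ n + 1) * Ci3 +
    (X : (Rp p)[X]) ^ n * Csum - Clam
end
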